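/- arXiv:2302.11005 — 2 statements merged into one kernel-verified Lean document; each statement's English description precedes it below -/
import Mathlib

section
/- Let (x₁,…,xₙ) ∈ Φⁿ \ {0} with n ≥ 3. If 0 ∈ x₁ ⊞ ⋯ ⊞ xₙ, then there exist indices j < k < ℓ such that 0 ∈ x_j ⊞ x_k ⊞ x_ℓ. -/
open Complex Set

noncomputable section

/-- The unit circle `S¹ ⊂ ℂ`. -/
def unitCircle : Set ℂ := Metric.sphere 0 1

/-- The tropical phase hyperfield `Φ = S¹ ∪ {0} ⊂ ℂ`. -/
def Phi : Set ℂ := unitCircle ∪ {0}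

/-- The smallest closed arc of `S¹` joining two non-zero, non-antipodal unit
complex numbers `x` and `y`: the set of phases of nonnegative combinations of `x,y`. -/
def smallArc (x y : ℂ) : Set ℂ :=
  {z : ℂ | ∃ a b : ℝ, 0 ≤ a ∧ 0 ≤ b ∧ 0 < a + b ∧
    z = ((a : ℂ) * x + (b : ℂ) * y) / ((‖(a : ℂ) * x + (b : ℂ) * y‖ : ℝ) : ℂ)}

/-- Hyperaddition in the tropical phase hyperfield. -/
def hadd (x y : ℂ) : Set ℂ :=
  if x = 0 then {y} else if y = 0 then {x} else if y = -x then Phi else smallArc x y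

/-- Iterated hypersum `x₁ ⊞ ⋯ ⊞ xₙ` (unions over intermediate choices). -/
def haddList : List ℂ → Set ℂ
  | [] => {0}
  | a :: l => ⋃ w ∈ haddList l, hadd a w

/-!
An element of `x₁ ⊞ ⋯ ⊞ xₙ` is the phase of a nonnegative combination of the `xᵢ`, unless an
antipodal pair has already forced `0` into the convex hull of the nonzero `xᵢ`; conversely the
phase of every point of that convex hull is reached by the hypersum. Hence `0 ∈ x₁ ⊞ ⋯ ⊞ xₙ`
exactly when all `xᵢ` vanish or `0` lies in the convex hull of the nonzero `xᵢ`. As `ℂ` is a real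
plane, Carathéodory's theorem finds `0` already in the convex hull of at most three of them, and
the same characterization applied to three such entries gives the triple.
-/

namespace ConvexCone

theorem smul_add_smul_mem {R M : Type*} [Semiring R] [PartialOrder R] [AddCommMonoid M]
    [Module R M] (C : ConvexCone R M) {x y : M} (hx : x ∈ C) (hy : y ∈ C) {a b : R}
    (ha : 0 ≤ a) (hb : 0 ≤ b) (hab : 0 < a + b) : a • x + b • y ∈ C := by
  rcases ha.eq_or_lt with rfl | ha
  · simpa using C.smul_mem (by simpa using hab) hy
  rcases hb.eq_or_lt with rfl | hb
  · simpa using C.smul_mem ha hx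
  exact C.add_mem (C.smul_mem ha hx) (C.smul_mem hb hy)

theorem zero_mem_convexHull_of_zero_mem_hull {𝕜 M : Type*} [Field 𝕜] [LinearOrder 𝕜]
    [IsStrictOrderedRing 𝕜] [AddCommGroup M] [Module 𝕜 M] {s : Set M} (h : 0 ∈ hull 𝕜 s) :
    0 ∈ convexHull 𝕜 s := by
  have h' : 0 ∈ hull 𝕜 (convexHull 𝕜 s) := hull_min ((subset_convexHull 𝕜 s).trans subset_hull) h
  obtain ⟨r, hr, hr0⟩ := (mem_hull_of_convex (convex_convexHull 𝕜 s)).1 h'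
  simpa [Set.zero_mem_smul_set_iff hr.ne'] using hr0

end ConvexCone

theorem exists_finset_card_le_finrank_succ_of_mem_convexHull {𝕜 E : Type*} [Field 𝕜]
    [LinearOrder 𝕜] [IsStrictOrderedRing 𝕜] [AddCommGroup E] [Module 𝕜 E] [FiniteDimensional 𝕜 E]
    {s : Set E} {x : E} (hx : x ∈ convexHull 𝕜 s) :
    ∃ t : Finset E, ↑t ⊆ s ∧ t.card ≤ Module.finrank 𝕜 E + 1 ∧ x ∈ convexHull 𝕜 (t : Set E) := by
  rw [convexHull_eq_union] at hx
  simp only [Set.mem_iUnion] at hx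
  obtain ⟨t, hts, hind, hxt⟩ := hx
  refine ⟨t, hts, ?_, hxt⟩
  calc t.card = Fintype.card t := (Fintype.card_coe t).symm
    _ ≤ Module.finrank 𝕜 (vectorSpan 𝕜 (Set.range ((↑) : t → E))) + 1 :=
      hind.card_le_finrank_succ
    _ ≤ Module.finrank 𝕜 E + 1 := by gcongr; exact Submodule.finrank_le _

theorem exists_lt_lt_of_card_le_three {α : Type*} {n : ℕ} (hn : 3 ≤ n) (x : Fin n → α)
    (t : Finset α) (htx : ↑t ⊆ Set.range x) (ht : t.card ≤ 3) :
    ∃ j k l : Fin n, j < k ∧ k < l ∧ ∀ y ∈ t, y = x j ∨ y = x k ∨ y = x l := by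
  classical
  have : Nonempty (Fin n) := ⟨⟨0, by omega⟩⟩
  obtain ⟨u, hu, hu3⟩ := Finset.exists_superset_card_eq
    ((Finset.card_image_le (s := t) (f := Function.invFun x)).trans ht) (by simpa using hn)
  let f := u.orderEmbOfFin hu3
  refine ⟨f 0, f 1, f 2, f.strictMono (by decide), f.strictMono (by decide), fun y hy => ?_⟩
  have hyu : Function.invFun x y ∈ Set.range f := by
    rw [Finset.range_orderEmbOfFin]; exact hu (Finset.mem_image_of_mem _ hy)
  obtain ⟨i, hi⟩ := hyu
  have hxy : x (f i) = y := by rw [hi]; exact Function.invFun_eq (htx hy)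
  fin_cases i <;> simp [← hxy]

theorem norm_eq_one_of_mem_Phi {z : ℂ} (hz : z ∈ Phi) (h0 : z ≠ 0) : ‖z‖ = 1 := by
  rcases hz with hz | hz
  · simpa [unitCircle] using hz
  · exact absurd hz h0

theorem mem_Phi_of_norm_eq_one {z : ℂ} (hz : ‖z‖ = 1) : z ∈ Phi :=
  Or.inl (by simpa [unitCircle] using hz)

theorem neg_mem_Phi {z : ℂ} (hz : z ∈ Phi) : -z ∈ Phi := by
  rcases hz with hz | hz
  · exact Or.inl (by simpa [unitCircle] using hz)
  · exact Or.inr (by simpa using hz)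

@[simp]
theorem hadd_zero_left (y : ℂ) : hadd 0 y = {y} := by simp [hadd]

theorem hadd_zero_right {x : ℂ} (hx : x ≠ 0) : hadd x 0 = {x} := by simp [hadd, hx]

theorem hadd_neg_self {x : ℂ} (hx : x ≠ 0) : hadd x (-x) = Phi := by simp [hadd, hx]

theorem hadd_of_ne_neg {x y : ℂ} (hx : x ≠ 0) (hy : y ≠ 0) (hxy : y ≠ -x) :
    hadd x y = smallArc x y := by simp [hadd, hx, hy, hxy]

theorem mem_haddList_cons {w a : ℂ} {l : List ℂ} :
    w ∈ haddList (a :: l) ↔ ∃ w' ∈ haddList l, w ∈ hadd a w' := by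
  simp [haddList]

theorem eq_neg_of_smul_add_smul_eq_zero {a b : ℂ} (ha : ‖a‖ = 1) (hb : ‖b‖ = 1) {s t : ℝ}
    (hs : 0 ≤ s) (ht : 0 ≤ t) (h : s • a + t • b = 0) (hsa : s • a ≠ 0) : b = -a := by
  have hst : t = s := by
    have := congrArg norm (eq_neg_of_add_eq_zero_right h)
    rwa [norm_neg, norm_smul, norm_smul, ha, hb, Real.norm_of_nonneg hs,
      Real.norm_of_nonneg ht, mul_one, mul_one] at this
  subst hst
  have ht0 : t ≠ 0 := by rintro rfl; simp at hsa
  exact smul_right_injective ℂ ht0 (by simpa [smul_neg] using eq_neg_of_add_eq_zero_right h)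

theorem eq_div_norm_of_smul_eq {u v : ℂ} (hu : u ∈ Phi) {r : ℝ} (hr : 0 ≤ r) (h : r • u = v)
    (hv : v ≠ 0) : u = v / (‖v‖ : ℂ) := by
  have hu0 : u ≠ 0 := by rintro rfl; simp [← h] at hv
  have hvr : ‖v‖ = r := by
    rw [← h, norm_smul, norm_eq_one_of_mem_Phi hu hu0, Real.norm_of_nonneg hr, mul_one]
  have hr0 : (r : ℂ) ≠ 0 := by
    rw [← hvr]; exact_mod_cast norm_ne_zero_iff.2 hv
  rw [hvr, ← h, Complex.real_smul, mul_div_cancel_left₀ _ hr0]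

theorem mem_hadd_of_smul_eq {a b u : ℂ} (ha : ‖a‖ = 1) (hb : ‖b‖ = 1) (hu : u ∈ Phi)
    {r s t : ℝ} (hr : 0 ≤ r) (hs : 0 ≤ s) (ht : 0 ≤ t) (hst : 0 < s + t)
    (h : r • u = s • a + t • b) : u ∈ hadd a b := by
  have ha0 : a ≠ 0 := norm_ne_zero_iff.1 (by simp [ha])
  have hb0 : b ≠ 0 := norm_ne_zero_iff.1 (by simp [hb])
  by_cases hba : b = -a
  · rw [hba, hadd_neg_self ha0]; exact hu
  rw [hadd_of_ne_neg ha0 hb0 hba]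
  have hv : s • a + t • b ≠ 0 := by
    intro hv
    by_cases hs0 : s = 0
    · subst hs0
      simp only [zero_smul, zero_add, smul_eq_zero, hb0, or_false] at hv
      simp [hv] at hst
    · exact hba (eq_neg_of_smul_add_smul_eq_zero ha hb hs ht hv (smul_ne_zero hs0 ha0))
  refine ⟨s, t, hs, ht, hst, ?_⟩
  simpa only [Complex.real_smul] using eq_div_norm_of_smul_eq hu hr h hv

theorem mem_or_zero_mem_of_mem_hadd {C : ConvexCone ℝ ℂ} {a b w : ℂ} (ha : a ∈ C) (hb : b ∈ C)
    (hw : w ∈ hadd a b) : w ∈ C ∨ 0 ∈ C := by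
  unfold hadd at hw
  split_ifs at hw with ha0 hb0 hba
  · exact Or.inl (by rwa [hw])
  · exact Or.inl (by rwa [hw])
  · exact Or.inr (by simpa [hba] using C.add_mem ha hb)
  obtain ⟨s, t, hs, ht, hst, rfl⟩ := hw
  have hv : s • a + t • b ∈ C := C.smul_add_smul_mem ha hb hs ht hst
  simp only [← Complex.real_smul] at hv ⊢
  by_cases hv0 : s • a + t • b = 0
  · exact Or.inr (hv0 ▸ hv)
  · left
    rw [div_eq_inv_mul, ← Complex.ofReal_inv, ← Complex.real_smul]
    exact C.smul_mem (by positivity) hv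

def nonzeroEntries (l : List ℂ) : Set ℂ := {z | z ∈ l ∧ z ≠ 0}

@[simp]
theorem nonzeroEntries_cons_zero (l : List ℂ) : nonzeroEntries (0 :: l) = nonzeroEntries l := by
  ext z; simp +contextual [nonzeroEntries]

theorem nonzeroEntries_cons_of_ne_zero {a : ℂ} (ha : a ≠ 0) (l : List ℂ) :
    nonzeroEntries (a :: l) = insert a (nonzeroEntries l) := by
  ext z; simp only [nonzeroEntries, List.mem_cons, Set.mem_insert_iff, Set.mem_ofPred_eq]
  grind

theorem nonzeroEntries_eq_empty_iff {l : List ℂ} : nonzeroEntries l = ∅ ↔ ∀ z ∈ l, z = 0 := by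
  simp [nonzeroEntries, Set.eq_empty_iff_forall_notMem]

/-- The middle alternative cannot be dropped: `a ⊞ (-a) = Φ`, whose elements need not lie in the
cone. -/
theorem mem_hull_or_zero_mem_hull_of_mem_haddList {w : ℂ} {l : List ℂ} (hw : w ∈ haddList l) :
    w ∈ ConvexCone.hull ℝ (nonzeroEntries l) ∨ 0 ∈ ConvexCone.hull ℝ (nonzeroEntries l) ∨
      (w = 0 ∧ ∀ z ∈ l, z = 0) := by
  induction l generalizing w with
  | nil => simp_all [haddList]
  | cons a l ih =>
    obtain ⟨w', hw', hw⟩ := mem_haddList_cons.1 hw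
    by_cases ha : a = 0
    · subst ha
      rw [hadd_zero_left, Set.mem_singleton_iff] at hw
      subst hw
      simpa using ih hw'
    set C := ConvexCone.hull ℝ (nonzeroEntries (a :: l))
    have hCl : ConvexCone.hull ℝ (nonzeroEntries l) ≤ C := ConvexCone.hull_min
      ((nonzeroEntries_cons_of_ne_zero ha l ▸ Set.subset_insert _ _).trans ConvexCone.subset_hull)
    have haC : a ∈ C := ConvexCone.subset_hull ⟨List.mem_cons_self, ha⟩
    by_cases hw'0 : w' = 0
    · rw [hw'0, hadd_zero_right ha, Set.mem_singleton_iff] at hw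
      exact Or.inl (hw ▸ haC)
    rcases ih hw' with hw'C | h0C | ⟨hw'0', -⟩
    · exact (mem_or_zero_mem_of_mem_hadd haC (hCl hw'C) hw).imp_right Or.inl
    · exact Or.inr (Or.inl (hCl h0C))
    · exact absurd hw'0' hw'0

theorem zero_mem_haddList_of_forall_eq_zero {l : List ℂ} (hl : ∀ z ∈ l, z = 0) :
    0 ∈ haddList l := by
  induction l with
  | nil => exact Set.mem_singleton 0
  | cons a l ih =>
    rw [List.forall_mem_cons] at hl
    exact mem_haddList_cons.2 ⟨0, ih hl.2, by simp [hl.1]⟩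

/-- Stated for every `u` on the ray through a point of the convex hull so that, for the point `0`
(with `r = 0`), the induction hypothesis yields all of `Φ ⊆ ⊞ l`. -/
theorem mem_haddList_of_smul_mem_convexHull {l : List ℂ} (hl : ∀ z ∈ l, z ∈ Phi) {u : ℂ}
    (hu : u ∈ Phi) {r : ℝ} (hr : 0 ≤ r) (h : r • u ∈ convexHull ℝ (nonzeroEntries l)) :
    u ∈ haddList l := by
  induction l generalizing u r with
  | nil => simp [nonzeroEntries] at h
  | cons a l ih =>
    rw [List.forall_mem_cons] at hl
    obtain ⟨haPhi, hl⟩ := hl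
    rw [mem_haddList_cons]
    by_cases ha : a = 0
    · subst ha
      rw [nonzeroEntries_cons_zero] at h
      exact ⟨u, ih hl hu hr h, by simp⟩
    have ha1 : ‖a‖ = 1 := norm_eq_one_of_mem_Phi haPhi ha
    rw [nonzeroEntries_cons_of_ne_zero ha] at h
    rcases (nonzeroEntries l).eq_empty_or_nonempty with hS | hS
    · rw [hS, insert_empty_eq, convexHull_singleton, Set.mem_singleton_iff] at h
      refine ⟨0, zero_mem_haddList_of_forall_eq_zero (nonzeroEntries_eq_empty_iff.1 hS), ?_⟩
      rw [hadd_zero_right ha, Set.mem_singleton_iff, eq_div_norm_of_smul_eq hu hr h ha, ha1]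
      simp
    rw [convexHull_insert hS, convexJoin_singleton_left] at h
    obtain ⟨q, hq, s, t, hs, ht, hst, hsq⟩ := Set.mem_iUnion₂.1 h
    by_cases hq0 : q = 0
    · refine ⟨-a, ih hl (neg_mem_Phi haPhi) le_rfl (by simpa [hq0] using hq), ?_⟩
      rw [hadd_neg_self ha]
      exact hu
    have hq1 : ‖(‖q‖⁻¹ : ℝ) • q‖ = 1 := norm_smul_inv_norm hq0
    have hq_pos : 0 < ‖q‖ := norm_pos_iff.2 hq0
    have hq_eq : ‖q‖ • (‖q‖⁻¹ : ℝ) • q = q := smul_inv_smul₀ hq_pos.ne' q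
    refine ⟨(‖q‖⁻¹ : ℝ) • q, ih hl (mem_Phi_of_norm_eq_one hq1) hq_pos.le (by rwa [hq_eq]), ?_⟩
    refine mem_hadd_of_smul_eq (t := t * ‖q‖) ha1 hq1 hu hr hs (by positivity) ?_ ?_
    · nlinarith [mul_nonneg ht hq_pos.le]
    · rw [← hsq, mul_smul, hq_eq]

theorem zero_mem_haddList_iff {l : List ℂ} (hl : ∀ z ∈ l, z ∈ Phi) :
    0 ∈ haddList l ↔ (∀ z ∈ l, z = 0) ∨ 0 ∈ convexHull ℝ (nonzeroEntries l) := by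
  refine ⟨fun h => ?_, ?_⟩
  · rcases mem_hull_or_zero_mem_hull_of_mem_haddList h with h0 | h0 | ⟨-, hzero⟩
    · exact Or.inr (ConvexCone.zero_mem_convexHull_of_zero_mem_hull h0)
    · exact Or.inr (ConvexCone.zero_mem_convexHull_of_zero_mem_hull h0)
    · exact Or.inl hzero
  · rintro (hzero | h0)
    · exact zero_mem_haddList_of_forall_eq_zero hzero
    · exact mem_haddList_of_smul_mem_convexHull hl (Or.inr rfl) le_rfl (by simpa using h0)

theorem exists_triple_of_zero_mem_general (n : ℕ) (hn : 3 ≤ n) (x : Fin n → ℂ)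
    (hx : ∀ k, x k ∈ Phi)
    (h : (0 : ℂ) ∈ haddList (List.ofFn x)) :
    ∃ j k l : Fin n, j < k ∧ k < l ∧ (0 : ℂ) ∈ haddList [x j, x k, x l] := by
  have hPhi : ∀ z ∈ List.ofFn x, z ∈ Phi := by simpa [List.forall_mem_ofFn_iff] using hx
  rcases (zero_mem_haddList_iff hPhi).1 h with hzero | h0
  · obtain ⟨j, k, l, hjk, hkl, -⟩ := exists_lt_lt_of_card_le_three hn x ∅ (by simp) (by simp)
    refine ⟨j, k, l, hjk, hkl, zero_mem_haddList_of_forall_eq_zero ?_⟩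
    simp [List.forall_mem_ofFn_iff.1 hzero]
  obtain ⟨t, hts, htc, ht0⟩ := exists_finset_card_le_finrank_succ_of_mem_convexHull h0
  obtain ⟨j, k, l, hjk, hkl, htjkl⟩ := exists_lt_lt_of_card_le_three hn x t
    (fun y hy => (List.mem_ofFn' x y).1 (hts hy).1) (by simpa using htc)
  refine ⟨j, k, l, hjk, hkl, (zero_mem_haddList_iff (by simp [hx])).2 (Or.inr ?_)⟩
  refine convexHull_mono (fun y hy => ?_) ht0
  exact ⟨by simpa using htjkl y hy, (hts hy).2⟩

/-- If `x ∈ Φⁿ \ {0}`, `n ≥ 3`, and `0 ∈ x₁ ⊞ ⋯ ⊞ xₙ`, then there are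
indices `j < k < ℓ` with `0 ∈ x_j ⊞ x_k ⊞ x_ℓ`. -/
theorem exists_triple_of_zero_mem (n : ℕ) (hn : 3 ≤ n) (x : Fin n → ℂ)
    (hx : ∀ k, x k ∈ Phi) (hx0 : x ≠ 0)
    (h : (0 : ℂ) ∈ haddList (List.ofFn x)) :
    ∃ j k l : Fin n, j < k ∧ k < l ∧ (0 : ℂ) ∈ haddList [x j, x k, x l] :=
  exists_triple_of_zero_mem_general n hn x hx h
end
end

section
/- For n ≥ 3, if x < y in 1ₙ^⊥ \ {0} with xₙ ∈ S¹, and 0 ∈ x_j ⊞ x_k ⊞ xₙ for some j < k < n, then 0 ∈ y_j ⊞ y_k ⊞ yₙ. Consequently every chain in {x ∈ 1ₙ^⊥ : xₙ ∈ S¹} is entirely contained in {x ∈ Φⁿ \ {0} : 0 ∈ x_j ⊞ x_k ⊞ xₙ} for some j < k < n. -/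
open Complex Set

noncomputable section

open scoped Classical

/-- The set of covectors `w^⊥ = {x ∈ Φⁿ : 0 ∈ w₁x₁ ⊞ ⋯ ⊞ wₙxₙ}`. -/
def perp {n : ℕ} (w : Fin n → ℂ) : Set (Fin n → ℂ) :=
  {x | (∀ k, x k ∈ Phi) ∧ (0 : ℂ) ∈ haddList (List.ofFn fun k => w k * x k)}

/-- The number of nonzero entries of `x`, i.e. `|supp(x)|`. -/
def suppCard {n : ℕ} (x : Fin n → ℂ) : ℕ :=
  (Finset.univ.filter (fun j => x j ≠ 0)).card

/-- The partial order on `Φ`: `0` is below every point of `S¹`. -/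
def phiLE (x y : ℂ) : Prop := x = y ∨ x = 0

/-- The componentwise order on `Φⁿ`. -/
def phiLEn {n : ℕ} (x y : Fin n → ℂ) : Prop := ∀ j, phiLE (x j) (y j)

/-!
If `0 ∈ u₁ ⊞ ⋯ ⊞ uₘ` and not all `uᵢ` vanish, the cone spanned by the `uᵢ` contains a line: by
induction along the hypersum, each partial sum is a nonzero point of the cone unless such a line
has already appeared. Conversely, if the cone spanned by the entries of `x ∈ Φⁿ⁺¹` contains a line
and `xₙ = z ∈ S¹`, then either some entry is `-z`, or, after rotating `z` to `1`, averaging the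
cross products of the entries above and below the real axis produces entries `u, v` with
`u + b v + c z = 0`, `b > 0`, `c ≥ 0`; in both cases `0 ∈ u ⊞ v ⊞ z`. The cone grows with `x`, so
the triple condition is monotone, and a chain is handled through its element of minimal support.
-/

open PointedCone ComplexConjugate

lemma zero_mem_Phi : (0 : ℂ) ∈ Phi := Or.inr rfl

lemma mem_Phi_of_norm_eq_one_s18 {u : ℂ} (h : ‖u‖ = 1) : u ∈ Phi :=
  Or.inl (by simpa [unitCircle] using h)

lemma norm_eq_one_of_mem_Phi_s18 {u : ℂ} (h : u ∈ Phi) (h0 : u ≠ 0) : ‖u‖ = 1 := by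
  simpa [unitCircle] using h.resolve_right h0

lemma neg_mem_Phi_s18 {u : ℂ} (h : u ∈ Phi) : -u ∈ Phi := by
  obtain rfl | h0 := eq_or_ne u 0
  · simpa using zero_mem_Phi
  · exact mem_Phi_of_norm_eq_one_s18 (by simpa using norm_eq_one_of_mem_Phi_s18 h h0)

lemma zero_mem_hadd_neg (u : ℂ) : (0 : ℂ) ∈ hadd u (-u) := by
  obtain rfl | h0 := eq_or_ne u 0
  · simp [hadd]
  · simp [hadd, h0, zero_mem_Phi]

lemma hadd_neg_left {z : ℂ} (hz : z ≠ 0) : hadd (-z) z = Phi := by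
  simp [hadd, hz]

lemma hadd_eq_smallArc {u v : ℂ} (hu : u ≠ 0) (hv : v ≠ 0) (huv : v ≠ -u) :
    hadd u v = smallArc u v := by
  simp [hadd, hu, hv, huv]

lemma right_mem_hadd (u : ℂ) {z : ℂ} (hz : ‖z‖ = 1) : z ∈ hadd u z := by
  have hz0 : z ≠ 0 := norm_ne_zero_iff.mp (by simp [hz])
  by_cases hu0 : u = 0
  · simp [hadd, hu0]
  by_cases hzu : z = -u
  · simpa [hadd, hu0, hz0, hzu] using mem_Phi_of_norm_eq_one_s18 (hzu ▸ hz)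
  · rw [hadd_eq_smallArc hu0 hz0 hzu]
    exact ⟨0, 1, le_rfl, zero_le_one, by norm_num, by simp [hz]⟩

lemma neg_mem_smallArc_of_combination {u v z : ℂ} {a b c : ℝ} (hu : ‖u‖ = 1) (ha : 0 < a)
    (hb : 0 ≤ b) (hc : 0 ≤ c) (h : (a : ℂ) * u + b * v + c * z = 0) : -u ∈ smallArc v z := by
  have hcomb : (b : ℂ) * v + c * z = -(a * u) := by linear_combination h
  have hbc : 0 < b + c := by
    refine (add_nonneg hb hc).lt_of_ne fun hbc => ?_
    have hb0 : b = 0 := by linarith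
    have hc0 : c = 0 := by linarith
    have := congrArg norm hcomb
    simp only [hb0, hc0, Complex.ofReal_zero, zero_mul, add_zero, norm_zero, norm_neg, norm_mul,
      Complex.norm_real, Real.norm_eq_abs, hu, mul_one] at this
    exact ha.ne' (abs_eq_zero.mp this.symm)
  refine ⟨b, c, hb, hc, hbc, ?_⟩
  have ha' : (a : ℂ) ≠ 0 := by exact_mod_cast ha.ne'
  rw [hcomb, norm_neg, norm_mul, hu, Complex.norm_real, Real.norm_of_nonneg ha.le]
  field_simp

lemma haddList_singleton (c : ℂ) : haddList [c] = {c} := by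
  by_cases hc : c = 0 <;> simp [haddList, hadd, hc]

lemma mem_haddList_triple {u v z w : ℂ} :
    w ∈ haddList [u, v, z] ↔ ∃ t ∈ hadd v z, w ∈ hadd u t := by
  rw [haddList, haddList, haddList_singleton]
  simp

lemma zero_mem_haddList_neg_left (v : ℂ) {z : ℂ} (hz : ‖z‖ = 1) :
    (0 : ℂ) ∈ haddList [-z, v, z] :=
  mem_haddList_triple.2 ⟨z, right_mem_hadd v hz, by simpa using zero_mem_hadd_neg (-z)⟩

lemma zero_mem_haddList_neg_middle {u z : ℂ} (hu : u ∈ Phi) (hz : z ≠ 0) :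
    (0 : ℂ) ∈ haddList [u, -z, z] :=
  mem_haddList_triple.2 ⟨-u, by rw [hadd_neg_left hz]; exact neg_mem_Phi_s18 hu, zero_mem_hadd_neg u⟩

lemma zero_mem_haddList_of_combination {u v z : ℂ} {a b c : ℝ} (hu : ‖u‖ = 1) (hv : v ≠ 0)
    (hz : z ≠ 0) (hvz : v ≠ -z) (ha : 0 < a) (hb : 0 ≤ b) (hc : 0 ≤ c)
    (h : (a : ℂ) * u + b * v + c * z = 0) : (0 : ℂ) ∈ haddList [u, v, z] := by
  have hzv : z ≠ -v := fun hzv => hvz (by rw [hzv, neg_neg])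
  refine mem_haddList_triple.2 ⟨-u, ?_, zero_mem_hadd_neg u⟩
  rw [hadd_eq_smallArc hv hz hzv]
  exact neg_mem_smallArc_of_combination hu ha hb hc h

lemma lineal_ne_bot_mono {E : Type*} [AddCommGroup E] [Module ℝ E] {C D : PointedCone ℝ E}
    (hCD : C ≤ D) (hC : C.lineal ≠ ⊥) : D.lineal ≠ ⊥ :=
  ne_bot_of_le_ne_bot hC fun _ hv => ⟨hCD hv.1, hCD hv.2⟩

lemma lineal_ne_bot_of_add_eq_zero {E : Type*} [AddCommGroup E] [Module ℝ E]
    {C : PointedCone ℝ E} {p q : E} (hp : p ∈ C) (hq : q ∈ C) (hpq : p + q = 0) (hp0 : p ≠ 0) :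
    C.lineal ≠ ⊥ :=
  (Submodule.ne_bot_iff _).2 ⟨p, mem_lineal.2 ⟨hp, by rwa [neg_eq_of_add_eq_zero_right hpq]⟩, hp0⟩

lemma exists_pos_combination_eq_zero_of_lineal_ne_bot {E : Type*} [AddCommGroup E] [Module ℝ E]
    {S : Finset E} (h : (hull ℝ (S : Set E)).lineal ≠ ⊥) :
    ∃ s ⊆ S, s.Nonempty ∧ (∀ u ∈ s, u ≠ 0) ∧
      ∃ a : E → ℝ, (∀ u ∈ s, 0 < a u) ∧ ∑ u ∈ s, a u • u = 0 := by
  obtain ⟨v, hv, hv0⟩ := (Submodule.ne_bot_iff _).1 h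
  obtain ⟨f, -, hf⟩ := Submodule.mem_span_finset.1 (mem_lineal.1 hv).1
  obtain ⟨g, -, hg⟩ := Submodule.mem_span_finset.1 (mem_lineal.1 hv).2
  replace hf : ∑ u ∈ S, (f u : ℝ) • u = v := hf
  replace hg : ∑ u ∈ S, (g u : ℝ) • u = -v := hg
  set a : E → ℝ := fun u => f u + g u
  have hsum : ∑ u ∈ S, a u • u = 0 := by
    simp only [a, add_smul, Finset.sum_add_distrib, hf, hg, add_neg_cancel]
  refine ⟨S.filter fun u => a u • u ≠ 0, Finset.filter_subset _ _, ?_,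
    fun u hu => (smul_ne_zero_iff.1 (Finset.mem_filter.1 hu).2).2, a,
    fun u hu => ?_, by rwa [Finset.sum_filter_ne_zero]⟩
  · by_contra hempty
    refine hv0 (hf.symm.trans (Finset.sum_eq_zero fun u hu => ?_))
    have hau : a u • u = 0 := by
      by_contra hau
      exact hempty ⟨u, Finset.mem_filter.2 ⟨hu, hau⟩⟩
    rcases smul_eq_zero.1 hau with ha0 | rfl
    · have hf0 : (f u : ℝ) = 0 := by
        have := (f u).2
        have := (g u).2
        simp only [a] at ha0
        linarith
      simp [hf0]
    · exact smul_zero _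
  · exact lt_of_le_of_ne (add_nonneg (f u).2 (g u).2)
      (smul_ne_zero_iff.1 (Finset.mem_filter.1 hu).2).1.symm

lemma real_mul_mem_hull {S : Set ℂ} {r : ℝ} {u : ℂ} (hr : 0 ≤ r) (hu : u ∈ hull ℝ S) :
    (r : ℂ) * u ∈ hull ℝ S := by
  simpa [Complex.real_smul] using (hull ℝ S).smul_mem hr hu

lemma lineal_ne_bot_or_mem_hull_of_mem_haddList :
    ∀ {l : List ℂ} {w : ℂ}, w ∈ haddList l →
      (hull ℝ {u | u ∈ l}).lineal ≠ ⊥ ∨ (w ≠ 0 ∧ w ∈ hull ℝ {u | u ∈ l}) ∨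
        (w = 0 ∧ ∀ u ∈ l, u = 0)
  | [], w, hw => Or.inr (Or.inr ⟨hw, by simp⟩)
  | a :: l, w, hw => by
    obtain ⟨w', hw', hw⟩ : ∃ w' ∈ haddList l, w ∈ hadd a w' := by simpa [haddList] using hw
    set K := hull ℝ {u | u ∈ l}
    set K' := hull ℝ {u | u ∈ a :: l}
    have hKK' : K ≤ K' := Submodule.span_mono fun u hu => List.mem_cons_of_mem a hu
    have ha : a ∈ K' := Submodule.subset_span List.mem_cons_self
    rcases lineal_ne_bot_or_mem_hull_of_mem_haddList hw' with hK | ⟨hw'0, hw'K⟩ | ⟨rfl, hl⟩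
    · exact Or.inl (lineal_ne_bot_mono hKK' hK)
    · unfold hadd at hw
      split_ifs at hw with ha0 haw
      · obtain rfl : w = w' := hw
        exact Or.inr (Or.inl ⟨hw'0, hKK' hw'K⟩)
      · exact Or.inl (lineal_ne_bot_of_add_eq_zero ha (hKK' hw'K) (by simp [haw]) ha0)
      · obtain ⟨s, t, hs, ht, hst, rfl⟩ := hw
        have hp : (s : ℂ) * a + t * w' ∈ K' :=
          add_mem (real_mul_mem_hull hs ha) (real_mul_mem_hull ht (hKK' hw'K))
        -- division by zero: the arc point is `0` when `s a + t w' = 0`, a relation in itself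
        by_cases hp0 : (s : ℂ) * a + t * w' = 0
        · refine Or.inl (lineal_ne_bot_of_add_eq_zero (real_mul_mem_hull hs ha)
            (real_mul_mem_hull ht (hKK' hw'K)) hp0 fun hsa => ?_)
          have hs0 : s = 0 := by simpa [ha0] using hsa
          have ht0 : t = 0 := by simpa [hs0, hw'0] using hp0
          linarith
        · refine Or.inr (Or.inl ⟨by simpa using hp0, ?_⟩)
          rw [div_eq_inv_mul, ← Complex.ofReal_inv]
          exact real_mul_mem_hull (by positivity) hp
    · obtain rfl : w = a := by by_cases ha0 : a = 0 <;> simpa [hadd, ha0] using hw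
      by_cases ha0 : w = 0
      · exact Or.inr (Or.inr ⟨ha0, by simpa [ha0] using hl⟩)
      · exact Or.inr (Or.inl ⟨ha0, ha⟩)

lemma lineal_hull_ne_bot_of_zero_mem_haddList {l : List ℂ} (h : (0 : ℂ) ∈ haddList l)
    (hl : ∃ u ∈ l, u ≠ 0) : (hull ℝ {u | u ∈ l}).lineal ≠ ⊥ := by
  obtain ⟨u, hu, hu0⟩ := hl
  rcases lineal_ne_bot_or_mem_hull_of_mem_haddList h with hK | ⟨h0, -⟩ | ⟨-, hl⟩
  · exact hK
  · exact absurd rfl h0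
  · exact absurd (hl u hu) hu0

section PositiveRelation

variable {ι : Type*} {s : Finset ι} {a : ι → ℝ} {w : ι → ℂ}

lemma sum_eq_sum_pos_add_sum_neg_add_sum_zero {M : Type*} [AddCommMonoid M] (s : Finset ι)
    (g : ι → ℝ) (f : ι → M) :
    ∑ i ∈ s, f i = ∑ i ∈ s with 0 < g i, f i + ∑ i ∈ s with g i < 0, f i +
      ∑ i ∈ s with g i = 0, f i := by
  simp only [Finset.sum_filter, ← Finset.sum_add_distrib]
  refine Finset.sum_congr rfl fun i _ => ?_
  rcases lt_trichotomy (g i) 0 with h | h | h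
  · simp [h, h.not_gt, h.ne]
  · simp [h]
  · simp [h, h.not_gt, h.ne']

lemma exists_im_pos_of_sum_eq_zero (hs : s.Nonempty) (ha : ∀ i ∈ s, 0 < a i)
    (hsum : ∑ i ∈ s, a i • w i = 0) (hreal : ∀ i ∈ s, (w i).im = 0 → 0 < (w i).re) :
    ∃ i ∈ s, 0 < (w i).im := by
  by_contra! h
  have him : ∑ i ∈ s, a i * (w i).im = 0 := by simpa using congrArg Complex.im hsum
  have hre : ∑ i ∈ s, a i * (w i).re = 0 := by simpa using congrArg Complex.re hsum
  have hzero (i) (hi : i ∈ s) : (w i).im = 0 := by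
    have hnonpos (j) (hj : j ∈ s) : a j * (w j).im ≤ 0 :=
      mul_nonpos_of_nonneg_of_nonpos (ha j hj).le (h j hj)
    exact (mul_eq_zero.1 ((Finset.sum_eq_zero_iff_of_nonpos hnonpos).1 him i hi)).resolve_left
      (ha i hi).ne'
  exact hre.not_gt (Finset.sum_pos (fun i hi => mul_pos (ha i hi) (hreal i hi (hzero i hi))) hs)

lemma sum_sum_mul_cross_nonpos (ha : ∀ i ∈ s, 0 < a i) (hsum : ∑ i ∈ s, a i • w i = 0)
    (hreal : ∀ i ∈ s, (w i).im = 0 → 0 < (w i).re) :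
    ∑ i ∈ s with 0 < (w i).im, ∑ j ∈ s with (w j).im < 0,
      a i * a j * ((w i).im * (w j).re - (w j).im * (w i).re) ≤ 0 := by
  set P := s.filter fun i => 0 < (w i).im
  set N := s.filter fun i => (w i).im < 0
  set Z := s.filter fun i => (w i).im = 0
  have hsplit := sum_eq_sum_pos_add_sum_neg_add_sum_zero (M := ℝ) s fun i => (w i).im
  have hI : ∑ i ∈ P, a i * (w i).im + ∑ i ∈ N, a i * (w i).im = 0 := by
    have hIZ : ∑ i ∈ Z, a i * (w i).im = 0 :=
      Finset.sum_eq_zero fun i hi => by simp [(Finset.mem_filter.1 hi).2]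
    linarith [hsplit fun i => a i * (w i).im, show ∑ i ∈ s, a i * (w i).im = 0 by
      simpa using congrArg Complex.im hsum]
  have hR : ∑ i ∈ P, a i * (w i).re + ∑ i ∈ N, a i * (w i).re + ∑ i ∈ Z, a i * (w i).re = 0 := by
    linarith [hsplit fun i => a i * (w i).re, show ∑ i ∈ s, a i * (w i).re = 0 by
      simpa using congrArg Complex.re hsum]
  have hIP : 0 ≤ ∑ i ∈ P, a i * (w i).im := Finset.sum_nonneg fun i hi =>
    (mul_pos (ha i (Finset.mem_filter.1 hi).1) (Finset.mem_filter.1 hi).2).le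
  have hRZ : 0 ≤ ∑ i ∈ Z, a i * (w i).re := Finset.sum_nonneg fun i hi => by
    obtain ⟨his, hi0⟩ := Finset.mem_filter.1 hi
    exact (mul_pos (ha i his) (hreal i his hi0)).le
  calc ∑ i ∈ P, ∑ j ∈ N, a i * a j * ((w i).im * (w j).re - (w j).im * (w i).re)
      = (∑ i ∈ P, a i * (w i).im) * (∑ j ∈ N, a j * (w j).re) -
          (∑ i ∈ P, a i * (w i).re) * (∑ j ∈ N, a j * (w j).im) := by
        simp only [Finset.sum_mul_sum, ← Finset.sum_sub_distrib]
        exact Finset.sum_congr rfl fun i _ => Finset.sum_congr rfl fun j _ => by ring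
    _ = -((∑ i ∈ P, a i * (w i).im) * ∑ i ∈ Z, a i * (w i).re) := by
        linear_combination (∑ i ∈ P, a i * (w i).im) * hR - (∑ i ∈ P, a i * (w i).re) * hI
    _ ≤ 0 := neg_nonpos.2 (mul_nonneg hIP hRZ)

lemma exists_im_pos_im_neg_cross_nonpos (hs : s.Nonempty) (ha : ∀ i ∈ s, 0 < a i)
    (hsum : ∑ i ∈ s, a i • w i = 0) (hreal : ∀ i ∈ s, (w i).im = 0 → 0 < (w i).re) :
    ∃ i ∈ s, ∃ j ∈ s, 0 < (w i).im ∧ (w j).im < 0 ∧ (w i).im * (w j).re ≤ (w j).im * (w i).re := by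
  obtain ⟨i₀, hi₀, hi₀im⟩ := exists_im_pos_of_sum_eq_zero hs ha hsum hreal
  obtain ⟨j₀, hj₀, hj₀im⟩ := exists_im_pos_of_sum_eq_zero (w := fun i => conj (w i)) hs ha
    (by simpa [Complex.real_smul] using congrArg conj hsum) (by simpa using hreal)
  by_contra! hcross
  refine (sum_sum_mul_cross_nonpos ha hsum hreal).not_gt (Finset.sum_pos (fun i hi => ?_)
    ⟨i₀, Finset.mem_filter.2 ⟨hi₀, hi₀im⟩⟩)
  refine Finset.sum_pos (fun j hj => ?_) ⟨j₀, Finset.mem_filter.2 ⟨hj₀, by simpa using hj₀im⟩⟩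
  obtain ⟨his, hiim⟩ := Finset.mem_filter.1 hi
  obtain ⟨hjs, hjim⟩ := Finset.mem_filter.1 hj
  exact mul_pos (mul_pos (ha i his) (ha j hjs)) (sub_pos.2 (hcross i his j hjs hiim hjim))

end PositiveRelation

lemma exists_add_real_mul_add_real_eq_zero {p q : ℂ} (hp : 0 < p.im) (hq : q.im < 0)
    (h : p.im * q.re ≤ q.im * p.re) :
    ∃ b : ℝ, 0 < b ∧ ∃ c : ℝ, 0 ≤ c ∧ p + (b : ℂ) * q + (c : ℂ) = 0 := by
  have hq' : q.im ≠ 0 := hq.ne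
  refine ⟨p.im / -q.im, div_pos hp (neg_pos.2 hq), (q.im * p.re - p.im * q.re) / -q.im,
    div_nonneg (by linarith) (by linarith), Complex.ext ?_ ?_⟩ <;>
  · simp only [Complex.add_re, Complex.add_im, Complex.mul_re, Complex.mul_im,
      Complex.ofReal_re, Complex.ofReal_im, Complex.zero_re, Complex.zero_im]
    field_simp
    ring

lemma pos_re_of_norm_eq_one_of_im_eq_zero {ζ : ℂ} (hζ : ‖ζ‖ = 1) (him : ζ.im = 0) (hne : ζ ≠ -1) :
    0 < ζ.re := by
  have hre : |ζ.re| = 1 := hζ ▸ Complex.abs_re_eq_norm.2 him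
  rcases abs_eq zero_le_one |>.1 hre with h | h
  · rw [h]; exact one_pos
  · exact absurd (Complex.ext (by simp [h]) (by simp [him])) hne

lemma exists_combination_of_lineal_hull_ne_bot {S : Finset ℂ} (hS : ∀ u ∈ S, u ∈ Phi) {z : ℂ}
    (hz : ‖z‖ = 1) (hzS : -z ∉ S) (h : (hull ℝ (S : Set ℂ)).lineal ≠ ⊥) :
    ∃ u ∈ S, ∃ v ∈ S, 0 < (conj z * u).im ∧ (conj z * v).im < 0 ∧
      ∃ b : ℝ, 0 < b ∧ ∃ c : ℝ, 0 ≤ c ∧ u + b * v + c * z = 0 := by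
  have hzz : z * conj z = 1 := by rw [Complex.mul_conj, Complex.normSq_eq_norm_sq, hz]; norm_num
  obtain ⟨s, hsS, hs, hs0, a, ha, hsum⟩ := exists_pos_combination_eq_zero_of_lineal_ne_bot h
  -- rotate `z` to `1`
  have hrot : ∑ u ∈ s, a u • (conj z * u) = 0 := by
    rw [← smul_zero (conj z), ← hsum, Finset.smul_sum]
    exact Finset.sum_congr rfl fun u _ => by rw [smul_eq_mul, mul_smul_comm]
  have hreal (u) (hu : u ∈ s) : (conj z * u).im = 0 → 0 < (conj z * u).re := by
    refine fun him => pos_re_of_norm_eq_one_of_im_eq_zero ?_ him fun h1 => hzS ?_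
    · rw [norm_mul, Complex.norm_conj, hz, norm_eq_one_of_mem_Phi_s18 (hS u (hsS hu)) (hs0 u hu),
        one_mul]
    · convert hsS hu
      linear_combination -(z * h1) + u * hzz
  obtain ⟨p, hp, q, hq, hpim, hqim, hcross⟩ := exists_im_pos_im_neg_cross_nonpos hs ha hrot hreal
  obtain ⟨b, hb, c, hc, hbc⟩ := exists_add_real_mul_add_real_eq_zero hpim hqim hcross
  exact ⟨p, hsS hp, q, hsS hq, hpim, hqim, b, hb, c, hc,
    by linear_combination z * hbc - (p + b * q) * hzz⟩

lemma exists_zero_mem_haddList_triple_of_eq_neg {n : ℕ} (hn : 2 ≤ n) {x : Fin (n + 1) → ℂ}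
    (hx : ∀ i, x i ∈ Phi) (hz : ‖x (Fin.last n)‖ = 1) {j : Fin (n + 1)}
    (hj : x j = -x (Fin.last n)) :
    ∃ j k : Fin (n + 1), j < k ∧ k < Fin.last n ∧
      (0 : ℂ) ∈ haddList [x j, x k, x (Fin.last n)] := by
  have hz0 : x (Fin.last n) ≠ 0 := norm_ne_zero_iff.mp (by simp [hz])
  have hjz : j ≠ Fin.last n := by
    rintro rfl
    exact hz0 (self_eq_neg.1 hj)
  obtain ⟨k, hkj, hkz⟩ : ∃ k : Fin (n + 1), k ≠ j ∧ k ≠ Fin.last n := by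
    by_cases hj0 : j.val = 0
    · exact ⟨⟨1, by omega⟩, by simp [Fin.ext_iff]; omega, by simp [Fin.ext_iff]; omega⟩
    · exact ⟨⟨0, by omega⟩, by simp [Fin.ext_iff]; omega, by simp [Fin.ext_iff]; omega⟩
  rcases lt_or_gt_of_ne hkj with hlt | hlt
  · exact ⟨k, j, hlt, Fin.lt_last_iff_ne_last.2 hjz,
      hj ▸ zero_mem_haddList_neg_middle (hx k) hz0⟩
  · exact ⟨j, k, hlt, Fin.lt_last_iff_ne_last.2 hkz, hj ▸ zero_mem_haddList_neg_left _ hz⟩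

lemma exists_zero_mem_haddList_triple_of_lineal_hull_ne_bot {n : ℕ} (hn : 2 ≤ n)
    {x : Fin (n + 1) → ℂ} (hx : ∀ i, x i ∈ Phi) (hz : ‖x (Fin.last n)‖ = 1)
    (h : (hull ℝ (range x)).lineal ≠ ⊥) :
    ∃ j k : Fin (n + 1), j < k ∧ k < Fin.last n ∧
      (0 : ℂ) ∈ haddList [x j, x k, x (Fin.last n)] := by
  set z := x (Fin.last n)
  by_cases hneg : ∃ j, x j = -z
  · obtain ⟨j, hj⟩ := hneg
    exact exists_zero_mem_haddList_triple_of_eq_neg hn hx hz hj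
  push Not at hneg
  have hz0 : z ≠ 0 := norm_ne_zero_iff.mp (by simp [hz])
  obtain ⟨u, hu, v, hv, huim, hvim, b, hb, c, hc, hcomb⟩ :=
    exists_combination_of_lineal_hull_ne_bot (S := Finset.univ.image x) (by simpa using hx) hz
      (by simpa using hneg) (by simpa using h)
  obtain ⟨j, -, rfl⟩ := Finset.mem_image.1 hu
  obtain ⟨k, -, rfl⟩ := Finset.mem_image.1 hv
  have hoff (i) (hi : (conj z * x i).im ≠ 0) : x i ≠ 0 ∧ i ≠ Fin.last n := by
    refine ⟨fun h0 => hi (by simp [h0]), ?_⟩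
    rintro rfl
    exact hi (by simp [z, Complex.conj_mul', ← Complex.ofReal_pow])
  obtain ⟨hj0, hjz⟩ := hoff j huim.ne'
  obtain ⟨hk0, hkz⟩ := hoff k hvim.ne
  have hjk : j ≠ k := by
    rintro rfl
    exact huim.not_gt hvim
  rcases lt_or_gt_of_ne hjk with hlt | hlt
  · refine ⟨j, k, hlt, Fin.lt_last_iff_ne_last.2 hkz,
      zero_mem_haddList_of_combination (a := 1) (norm_eq_one_of_mem_Phi_s18 (hx j) hj0) hk0 hz0
        (hneg k) one_pos hb.le hc (by simpa using hcomb)⟩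
  · refine ⟨k, j, hlt, Fin.lt_last_iff_ne_last.2 hjz,
      zero_mem_haddList_of_combination (norm_eq_one_of_mem_Phi_s18 (hx k) hk0) hj0 hz0
        (hneg j) hb zero_le_one hc (by push_cast; linear_combination hcomb)⟩

lemma zero_mem_haddList_triple_mono {u₁ v₁ u₂ v₂ z : ℂ} (hu : phiLE u₁ u₂) (hv : phiLE v₁ v₂)
    (hu₂ : u₂ ∈ Phi) (hv₂ : v₂ ∈ Phi) (hz : ‖z‖ = 1) (h : (0 : ℂ) ∈ haddList [u₁, v₁, z]) :
    (0 : ℂ) ∈ haddList [u₂, v₂, z] := by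
  have hz0 : z ≠ 0 := norm_ne_zero_iff.mp (by simp [hz])
  have hle : hull ℝ {w | w ∈ [u₁, v₁, z]} ≤ hull ℝ (range ![u₂, v₂, z]) := by
    have hmem {w₁ w₂ : ℂ} (hw : phiLE w₁ w₂) (hw₂ : w₂ ∈ range ![u₂, v₂, z]) :
        w₁ ∈ hull ℝ (range ![u₂, v₂, z]) := by
      rcases hw with rfl | rfl
      exacts [Submodule.subset_span hw₂, zero_mem _]
    refine Submodule.span_le.2 fun w hw => ?_
    simp only [List.mem_cons, List.not_mem_nil, or_false, mem_ofPred_eq] at hw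
    rcases hw with rfl | rfl | rfl
    exacts [hmem hu ⟨0, rfl⟩, hmem hv ⟨1, rfl⟩, hmem (Or.inl rfl) ⟨2, rfl⟩]
  obtain ⟨j, k, hjk, hk, h⟩ := exists_zero_mem_haddList_triple_of_lineal_hull_ne_bot le_rfl
    (x := ![u₂, v₂, z]) (fun i => by fin_cases i <;> simp [hu₂, hv₂, mem_Phi_of_norm_eq_one_s18 hz])
    hz (lineal_ne_bot_mono hle (lineal_hull_ne_bot_of_zero_mem_haddList h ⟨z, by simp, hz0⟩))
  fin_cases j <;> fin_cases k <;> simp_all [Fin.lt_def]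

lemma exists_zero_mem_haddList_triple {n : ℕ} (hn : 2 ≤ n) {x : Fin (n + 1) → ℂ}
    (hx : ∀ i, x i ∈ Phi) (hz : ‖x (Fin.last n)‖ = 1) (h : (0 : ℂ) ∈ haddList (List.ofFn x)) :
    ∃ j k : Fin (n + 1), j < k ∧ k < Fin.last n ∧
      (0 : ℂ) ∈ haddList [x j, x k, x (Fin.last n)] := by
  have hK := lineal_hull_ne_bot_of_zero_mem_haddList h
    ⟨x (Fin.last n), List.mem_ofFn.2 ⟨_, rfl⟩, norm_ne_zero_iff.mp (by simp [hz])⟩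
  rw [show {u | u ∈ List.ofFn x} = range x by ext; exact List.mem_ofFn] at hK
  exact exists_zero_mem_haddList_triple_of_lineal_hull_ne_bot hn hx hz hK

lemma zero_mem_haddList_triple_of_phiLEn {n : ℕ} {x y : Fin (n + 1) → ℂ} (hxy : phiLEn x y)
    (hy : ∀ i, y i ∈ Phi) (hz : ‖x (Fin.last n)‖ = 1) {j k : Fin (n + 1)}
    (h : (0 : ℂ) ∈ haddList [x j, x k, x (Fin.last n)]) :
    (0 : ℂ) ∈ haddList [y j, y k, y (Fin.last n)] := by
  have hlast : y (Fin.last n) = x (Fin.last n) :=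
    ((hxy _).resolve_right (norm_ne_zero_iff.mp (by simp [hz]))).symm
  rw [hlast]
  exact zero_mem_haddList_triple_mono (hxy j) (hxy k) (hy j) (hy k) hz h

lemma suppCard_lt_of_phiLEn {n : ℕ} {x y : Fin n → ℂ} (hxy : phiLEn x y) (hne : x ≠ y) :
    suppCard x < suppCard y := by
  obtain ⟨j, hj⟩ := Function.ne_iff.1 hne
  have hxj : x j = 0 := (hxy j).resolve_left hj
  refine Finset.card_lt_card ((Finset.ssubset_iff_of_subset fun i => ?_).2 ⟨j, ?_, ?_⟩)
  · simp only [Finset.mem_filter, Finset.mem_univ, true_and]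
    exact fun hi => (hxy i).elim (· ▸ hi) (absurd · hi)
  · simpa [hxj] using Ne.symm hj
  · simp [hxj]

lemma exists_forall_phiLEn_of_isChain {n : ℕ} {C : Set (Fin n → ℂ)} (hchain : IsChain phiLEn C)
    (hne : C.Nonempty) : ∃ x₀ ∈ C, ∀ x ∈ C, phiLEn x₀ x := by
  refine ⟨Function.argminOn suppCard C hne, Function.argminOn_mem suppCard C hne, fun x hx => ?_⟩
  by_cases hxx : Function.argminOn suppCard C hne = x
  · exact hxx ▸ fun _ => Or.inl rfl
  refine (hchain (Function.argminOn_mem suppCard C hne) hx hxx).resolve_right fun hle => ?_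
  exact Function.not_lt_argminOn suppCard C hx (suppCard_lt_of_phiLEn hle (Ne.symm hxx))

/-- For `n + 1 ≥ 3`: if `x < y` in `1ₙ^⊥ \ {0}` with `xₙ ∈ S¹` and
`0 ∈ x_j ⊞ x_k ⊞ xₙ` for some `j < k < n`, then `0 ∈ y_j ⊞ y_k ⊞ yₙ`.  Consequently
every chain in `{x ∈ 1ₙ^⊥ : xₙ ∈ S¹}` is contained in
`{x ∈ Φⁿ \ {0} : 0 ∈ x_j ⊞ x_k ⊞ xₙ}` for some `j < k < n`. -/
theorem chain_in_triple_set (n : ℕ) (hn : 2 ≤ n) :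
    (∀ x y : Fin (n + 1) → ℂ,
      x ∈ perp (fun _ : Fin (n + 1) => (1 : ℂ)) →
      y ∈ perp (fun _ : Fin (n + 1) => (1 : ℂ)) →
      x ≠ 0 → y ≠ 0 → phiLEn x y → x ≠ y → x (Fin.last n) ∈ unitCircle →
      ∀ j k : Fin (n + 1), j < k → k < Fin.last n →
        (0 : ℂ) ∈ haddList [x j, x k, x (Fin.last n)] →
        (0 : ℂ) ∈ haddList [y j, y k, y (Fin.last n)]) ∧
    ∀ C : Set (Fin (n + 1) → ℂ),
      C ⊆ {x ∈ perp (fun _ : Fin (n + 1) => (1 : ℂ)) | x (Fin.last n) ∈ unitCircle} →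
      IsChain phiLEn C →
      ∃ j k : Fin (n + 1), j < k ∧ k < Fin.last n ∧
        ∀ x ∈ C, (0 : ℂ) ∈ haddList [x j, x k, x (Fin.last n)] := by
  have hunit {u : ℂ} (hu : u ∈ unitCircle) : ‖u‖ = 1 := by simpa [unitCircle] using hu
  have hsum {x : Fin (n + 1) → ℂ} (hx : x ∈ perp fun _ => 1) : (0 : ℂ) ∈ haddList (List.ofFn x) :=
    by simpa using hx.2
  refine ⟨fun x y _ hy _ _ hxy _ hx j k _ _ h => zero_mem_haddList_triple_of_phiLEn hxy hy.1
    (hunit hx) h, fun C hC hchain => ?_⟩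
  rcases C.eq_empty_or_nonempty with rfl | hne
  · exact ⟨⟨0, by omega⟩, ⟨1, by omega⟩, by simp [Fin.lt_def], by simp [Fin.lt_def]; omega, by simp⟩
  obtain ⟨x₀, hx₀C, hmin⟩ := exists_forall_phiLEn_of_isChain hchain hne
  obtain ⟨hx₀, hx₀z⟩ := hC hx₀C
  obtain ⟨j, k, hjk, hk, h₀⟩ := exists_zero_mem_haddList_triple hn hx₀.1 (hunit hx₀z) (hsum hx₀)
  exact ⟨j, k, hjk, hk, fun x hx =>
    zero_mem_haddList_triple_of_phiLEn (hmin x hx) (hC hx).1.1 (hunit hx₀z) h₀⟩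
end
end
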